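/- arXiv:math/0004118 — 5 statements merged into one kernel-verified Lean document; each statement's English description precedes it below -/
import Mathlib

section
/- Let α, β, γ, δ ∈ ℂ and let I ⊆ (0,∞) be an open interval. Let q : I → ℂ be twice differentiable with sinh(q(t)/2) ≠ 0 and cosh(q(t)/2) ≠ 0 for all t ∈ I, and define λ(t) = coth(q(t)/2)². Then λ satisfies the fifth Painlevé equation λ'' = (1/(2λ) + 1/(λ−1))(λ')² − λ'/t + (λ(λ−1)²/t²)(α + β/λ² + γt/(λ−1)² + δt²(λ+1)/(λ−1)³) on I if and only if q satisfies t²q''(t) + t q'(t) = −[ α·cosh(q/2)/sinh³(q/2) + β·sinh(q/2)/cosh³(q/2) + (γt/2)·sinh(q) + (δt²/4)·sinh(2q) ] on I. -/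
/-!
Write `S = sinh (q/2)`, `C = cosh (q/2)`, so `λ = C²/S²` and `λ - 1 = 1/S²`. Then
`λ' = -(C/S³) q'` and `λ'' = -(C/S³) q'' - ((S² - 3C²)/(2S⁴)) q'²`. Substituting into P_V, the
`q'²` terms cancel because `C² - S² = 1`, and what remains is the identity
`λ'' - P_V(λ, λ') = -(C/(S³t²)) (t²q'' + tq' + ∂V/∂q)`; the prefactor never vanishes on `I`.
-/

open Complex Filter Topology

noncomputable def painleveVRhs (α β γ δ t l l' : ℂ) : ℂ :=
  (1 / (2 * l) + 1 / (l - 1)) * l' ^ 2 - l' / t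
    + l * (l - 1) ^ 2 / t ^ 2 *
        (α + β / l ^ 2 + γ * t / (l - 1) ^ 2 + δ * t ^ 2 * (l + 1) / (l - 1) ^ 3)

/-- `-∂V/∂q` for the hyperbolic Inozemtsev potential `V`. -/
noncomputable def inozemtsevForce (α β γ δ t q : ℂ) : ℂ :=
  -(α * cosh (q / 2) / sinh (q / 2) ^ 3 + β * sinh (q / 2) / cosh (q / 2) ^ 3
    + γ * t / 2 * sinh q + δ * t ^ 2 / 4 * sinh (2 * q))

theorem hasDerivAt_coth_half_sq {z : ℂ} (hz : sinh (z / 2) ≠ 0) :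
    HasDerivAt (fun w => (cosh (w / 2) / sinh (w / 2)) ^ 2)
      (-(cosh (z / 2) / sinh (z / 2) ^ 3)) z := by
  have hhalf := (hasDerivAt_id' z).div_const (2 : ℂ)
  refine ((hhalf.ccosh.div hhalf.csinh hz).pow 2).congr_deriv ?_
  simp only [Pi.div_apply, Nat.cast_ofNat, Nat.add_one_sub_one, pow_one]
  field_simp
  linear_combination -cosh (z / 2) * cosh_sq_sub_sinh_sq (z / 2)

theorem hasDerivAt_cosh_half_div_sinh_half_pow_three {z : ℂ} (hz : sinh (z / 2) ≠ 0) :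
    HasDerivAt (fun w => cosh (w / 2) / sinh (w / 2) ^ 3)
      ((sinh (z / 2) ^ 2 - 3 * cosh (z / 2) ^ 2) / (2 * sinh (z / 2) ^ 4)) z := by
  have hhalf := (hasDerivAt_id' z).div_const (2 : ℂ)
  refine (hhalf.ccosh.div (hhalf.csinh.pow 3) (pow_ne_zero 3 hz)).congr_deriv ?_
  simp only [Pi.pow_apply]
  field_simp
  ring

theorem hasDerivAt_coth_half_sq_comp {q : ℝ → ℂ} {q' : ℂ} {t : ℝ} (hq : HasDerivAt q q' t)
    (hs : sinh (q t / 2) ≠ 0) :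
    HasDerivAt (fun t => (cosh (q t / 2) / sinh (q t / 2)) ^ 2)
      (-(cosh (q t / 2) / sinh (q t / 2) ^ 3) * q') t :=
  (hasDerivAt_coth_half_sq hs).comp t hq

theorem deriv_deriv_coth_half_sq_comp {U : Set ℝ} (hU : IsOpen U) {q q' q'' : ℝ → ℂ}
    (hq : ∀ t ∈ U, HasDerivAt q (q' t) t) (hq' : ∀ t ∈ U, HasDerivAt q' (q'' t) t)
    (hs : ∀ t ∈ U, sinh (q t / 2) ≠ 0) {t : ℝ} (ht : t ∈ U) :
    deriv (deriv fun t => (cosh (q t / 2) / sinh (q t / 2)) ^ 2) t =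
      -((sinh (q t / 2) ^ 2 - 3 * cosh (q t / 2) ^ 2) / (2 * sinh (q t / 2) ^ 4) * q' t ^ 2
        + cosh (q t / 2) / sinh (q t / 2) ^ 3 * q'' t) := by
  have hderiv : deriv (fun t => (cosh (q t / 2) / sinh (q t / 2)) ^ 2)
      =ᶠ[𝓝 t] fun t => -(cosh (q t / 2) / sinh (q t / 2) ^ 3) * q' t :=
    eventuallyEq_of_mem (hU.mem_nhds ht) fun s hsU =>
      (hasDerivAt_coth_half_sq_comp (hq s hsU) (hs s hsU)).deriv
  have hG : HasDerivAt (fun t => cosh (q t / 2) / sinh (q t / 2) ^ 3)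
      ((sinh (q t / 2) ^ 2 - 3 * cosh (q t / 2) ^ 2) / (2 * sinh (q t / 2) ^ 4) * q' t) t :=
    (hasDerivAt_cosh_half_div_sinh_half_pow_three (hs t ht)).comp t (hq t ht)
  have hL : HasDerivAt (fun t => -(cosh (q t / 2) / sinh (q t / 2) ^ 3) * q' t)
      (-((sinh (q t / 2) ^ 2 - 3 * cosh (q t / 2) ^ 2) / (2 * sinh (q t / 2) ^ 4) * q' t) * q' t
        + -(cosh (q t / 2) / sinh (q t / 2) ^ 3) * q'' t) t :=
    hG.neg.mul (hq' t ht)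
  rw [hderiv.deriv_eq, hL.deriv]
  ring

theorem coth_half_sq_painleveV_residual (α β γ δ : ℂ) {z p P T : ℂ} (hs : sinh (z / 2) ≠ 0)
    (hc : cosh (z / 2) ≠ 0) (hT : T ≠ 0) :
    -((sinh (z / 2) ^ 2 - 3 * cosh (z / 2) ^ 2) / (2 * sinh (z / 2) ^ 4) * p ^ 2
        + cosh (z / 2) / sinh (z / 2) ^ 3 * P)
      - painleveVRhs α β γ δ T ((cosh (z / 2) / sinh (z / 2)) ^ 2)
          (-(cosh (z / 2) / sinh (z / 2) ^ 3) * p)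
      = -(cosh (z / 2) / (sinh (z / 2) ^ 3 * T ^ 2)) *
          (T ^ 2 * P + T * p - inozemtsevForce α β γ δ T z) := by
  have hsinh : sinh z = 2 * sinh (z / 2) * cosh (z / 2) := by
    rw [← sinh_two_mul, mul_div_cancel₀ _ two_ne_zero]
  have hcosh : cosh z = cosh (z / 2) ^ 2 + sinh (z / 2) ^ 2 := by
    rw [← cosh_two_mul, mul_div_cancel₀ _ two_ne_zero]
  have hrel := cosh_sq_sub_sinh_sq (z / 2)
  have hl1 : (cosh (z / 2) / sinh (z / 2)) ^ 2 - 1 = 1 / sinh (z / 2) ^ 2 := by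
    field_simp
    linear_combination hrel
  unfold painleveVRhs inozemtsevForce
  rw [sinh_two_mul, hsinh, hcosh, hl1]
  set S := sinh (z / 2)
  set C := cosh (z / 2)
  field_simp
  linear_combination 4 * S ^ 2 * C ^ 2 * T ^ 2 * p ^ 2 * hrel

theorem painleveV_coth_half_sq_iff (α β γ δ : ℂ) {z p P T : ℂ} (hs : sinh (z / 2) ≠ 0)
    (hc : cosh (z / 2) ≠ 0) (hT : T ≠ 0) :
    -((sinh (z / 2) ^ 2 - 3 * cosh (z / 2) ^ 2) / (2 * sinh (z / 2) ^ 4) * p ^ 2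
        + cosh (z / 2) / sinh (z / 2) ^ 3 * P)
      = painleveVRhs α β γ δ T ((cosh (z / 2) / sinh (z / 2)) ^ 2)
          (-(cosh (z / 2) / sinh (z / 2) ^ 3) * p)
      ↔ T ^ 2 * P + T * p = inozemtsevForce α β γ δ T z := by
  have hfactor : -(cosh (z / 2) / (sinh (z / 2) ^ 3 * T ^ 2)) ≠ 0 :=
    neg_ne_zero.2 (div_ne_zero hc (mul_ne_zero (pow_ne_zero 3 hs) (pow_ne_zero 2 hT)))
  rw [← sub_eq_zero, coth_half_sq_painleveV_residual α β γ δ hs hc hT, mul_eq_zero,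
    sub_eq_zero, or_iff_right hfactor]

/-- The Painlevé–Calogero correspondence for P_V: with λ = coth²(q/2), the function λ
satisfies the fifth Painlevé equation iff q satisfies the Newtonian equation
t²q'' + tq' = -∂V/∂q for the hyperbolic Inozemtsev potential. -/
theorem painleve_V_calogero_correspondence
    (α β γ δ : ℂ) (I : Set ℝ) (hI : IsOpen I) (hIpos : I ⊆ Set.Ioi (0 : ℝ))
    (q q' q'' : ℝ → ℂ)
    (hq : ∀ t ∈ I, HasDerivAt q (q' t) t)
    (hq' : ∀ t ∈ I, HasDerivAt q' (q'' t) t)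
    (hsinh : ∀ t ∈ I, Complex.sinh (q t / 2) ≠ 0)
    (hcosh : ∀ t ∈ I, Complex.cosh (q t / 2) ≠ 0)
    (lam : ℝ → ℂ)
    (hlam : ∀ t, lam t = (Complex.cosh (q t / 2) / Complex.sinh (q t / 2)) ^ 2) :
    (∀ t ∈ I,
        deriv (deriv lam) t =
          (1 / (2 * lam t) + 1 / (lam t - 1)) * deriv lam t ^ 2
            - deriv lam t / (t : ℂ)
            + lam t * (lam t - 1) ^ 2 / (t : ℂ) ^ 2 *
                (α + β / lam t ^ 2 + γ * (t : ℂ) / (lam t - 1) ^ 2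
                  + δ * (t : ℂ) ^ 2 * (lam t + 1) / (lam t - 1) ^ 3))
      ↔
    (∀ t ∈ I,
        (t : ℂ) ^ 2 * q'' t + (t : ℂ) * q' t =
          -(α * Complex.cosh (q t / 2) / Complex.sinh (q t / 2) ^ 3
            + β * Complex.sinh (q t / 2) / Complex.cosh (q t / 2) ^ 3
            + γ * (t : ℂ) / 2 * Complex.sinh (q t)
            + δ * (t : ℂ) ^ 2 / 4 * Complex.sinh (2 * q t))) := by
  obtain rfl : lam = fun t => (cosh (q t / 2) / sinh (q t / 2)) ^ 2 := funext hlam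
  refine forall₂_congr fun t ht => ?_
  rw [deriv_deriv_coth_half_sq_comp hI hq hq' hsinh ht,
    (hasDerivAt_coth_half_sq_comp (hq t ht) (hsinh t ht)).deriv]
  exact painleveV_coth_half_sq_iff α β γ δ (hsinh t ht) (hcosh t ht)
    (ofReal_ne_zero.2 (hIpos ht).ne')
end

section
/- Let κ₀, θ∞ ∈ ℂ and set α = 2θ∞ − κ₀ + 1 and β = −2κ₀². Let I ⊆ ℝ be an open interval and let q, p : I → ℂ be differentiable with q(t) ≠ 0 on I, satisfying the Hamiltonian system q'(t) = p(t) and p'(t) = (3/2)(q/2)⁵ + 4t(q/2)³ + 2(t² − α)(q/2) + β(q/2)⁻³ (the canonical equations q' = ∂𝓗/∂p, p' = −∂𝓗/∂q for 𝓗(q,p,t) = p²/2 − (1/2)(q/2)⁶ − 2t(q/2)⁴ − 2(t² − α)(q/2)² + β(q/2)⁻²). Define λ(t) = (q(t)/2)² and μ(t) = p(t)/(2q(t)) + (1/4)( λ(t) + 2t + 2κ₀/λ(t) ). Then λ and μ are differentiable on I and satisfy λ'(t) = (∂H/∂μ)(λ(t),μ(t),t) and μ'(t) = −(∂H/∂λ)(λ(t),μ(t),t)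 for the polynomial P_IV Hamiltonian H(λ,μ,t) = 2λ·[ μ² − ( λ/2 + t + κ₀/λ )·μ + θ∞/2 ]. -/
open Complex

/-!
With `λ = (q/2)²` and `μ = p/(2q) + (λ + 2t + 2κ₀/λ)/4` one has `2μ - (λ/2 + t + κ₀/λ) = p/q`, so
`∂H/∂μ = 2λ · p/q = q q'/2 = λ'`. For the second equation, differentiate
`μ = p/(2q) + q²/16 + t/2 + 2κ₀/q²` along the flow and substitute `q' = p` and the force law for `p'`;
with `α = 2θ∞ - κ₀ + 1` and `β = -2κ₀²` the result is identically `-∂H/∂λ`, a rational identity in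
`q, p, t`.
-/

noncomputable section

def pivHamiltonian (κ₀ θ l m s : ℂ) : ℂ :=
  2 * l * (m ^ 2 - (l / 2 + s + κ₀ / l) * m + θ / 2)

def pivMomentum (κ₀ q p s : ℂ) : ℂ :=
  p / (2 * q) + ((q / 2) ^ 2 + 2 * s + 2 * κ₀ / (q / 2) ^ 2) / 4

end

section Hamiltonian

variable (κ₀ θ s : ℂ)

lemma hasDerivAt_pivHamiltonian_momentum (l m : ℂ) :
    HasDerivAt (fun m => pivHamiltonian κ₀ θ l m s)
      (2 * l * (2 * m - (l / 2 + s + κ₀ / l))) m := by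
  have h := (((hasDerivAt_pow 2 m).sub ((hasDerivAt_id m).const_mul (l / 2 + s + κ₀ / l))).add_const
    (θ / 2)).const_mul (2 * l)
  exact h.congr_deriv (by norm_num)

lemma hasDerivAt_pivHamiltonian_position (m : ℂ) {l : ℂ} (hl : l ≠ 0) :
    HasDerivAt (fun l => pivHamiltonian κ₀ θ l m s)
      (2 * m ^ 2 - 2 * l * m - 2 * s * m + θ) l := by
  have h := (((hasDerivAt_id l).const_mul (2 * m ^ 2 - 2 * s * m + θ)).sub
      ((hasDerivAt_pow 2 l).const_mul m)).sub_const (2 * κ₀ * m)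
  refine (h.congr_deriv (by norm_num; ring)).congr_of_eventuallyEq ?_
  filter_upwards [eventually_ne_nhds hl] with x hx
  simp only [pivHamiltonian, Pi.sub_apply, id]
  field_simp
  ring

end Hamiltonian

section ChangeOfVariables

variable {q p : ℝ → ℂ} {q' p' : ℂ} {t : ℝ}

lemma hasDerivAt_sq_half (hq : HasDerivAt q q' t) :
    HasDerivAt (fun s => (q s / 2) ^ 2) (q t * q' / 2) t :=
  ((hq.div_const 2).fun_pow 2).congr_deriv (by norm_num; ring)

lemma hasDerivAt_pivMomentum (κ₀ : ℂ) (hq : HasDerivAt q q' t) (hp : HasDerivAt p p' t)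
    (hq0 : q t ≠ 0) :
    HasDerivAt (fun s => pivMomentum κ₀ (q s) (p s) s)
      ((p' * q t - p t * q') / (2 * q t ^ 2) + q t * q' / 8 + 1 / 2 - 4 * κ₀ * q' / q t ^ 3) t := by
  have hpq := hp.fun_div (hq.const_mul 2) (mul_ne_zero two_ne_zero hq0)
  have hq2 := hq.fun_pow 2
  have hinv := (hasDerivAt_const t (2 * κ₀)).fun_div hq2 (pow_ne_zero 2 hq0)
  have hs : HasDerivAt (fun s : ℝ => (s : ℂ) / 2) (1 / 2) t := by
    simpa using (ofRealCLM.hasDerivAt (x := t)).div_const 2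
  have h := ((hpq.add (hq2.div_const 16)).add hs).add hinv
  have e : (fun s => pivMomentum κ₀ (q s) (p s) s)
      = fun s => p s / (2 * q s) + q s ^ 2 / 16 + (s : ℂ) / 2 + 2 * κ₀ / q s ^ 2 := by
    funext s
    simp only [pivMomentum]
    ring
  rw [e]
  refine h.congr_deriv ?_
  norm_num
  field_simp
  ring

end ChangeOfVariables

lemma two_mul_pivMomentum (κ₀ q p s : ℂ) :
    2 * pivMomentum κ₀ q p s = p / q + ((q / 2) ^ 2 / 2 + s + κ₀ / (q / 2) ^ 2) := by
  simp only [pivMomentum]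
  ring

lemma pivMomentum_flow_deriv_eq (κ₀ θ q p s : ℂ) (hq : q ≠ 0) :
    let F := (3 / 2) * (q / 2) ^ 5 + 4 * s * (q / 2) ^ 3
      + 2 * (s ^ 2 - (2 * θ - κ₀ + 1)) * (q / 2) + (-2 * κ₀ ^ 2) / (q / 2) ^ 3
    let μ := pivMomentum κ₀ q p s
    (F * q - p * p) / (2 * q ^ 2) + q * p / 8 + 1 / 2 - 4 * κ₀ * p / q ^ 3
      = -(2 * μ ^ 2 - 2 * (q / 2) ^ 2 * μ - 2 * s * μ + θ) := by
  simp only [pivMomentum]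
  field_simp
  ring

theorem PIV_canonical_transformation_general
    (κ₀ θinf α β : ℂ)
    (hα : α = 2 * θinf - κ₀ + 1) (hβ : β = -2 * κ₀ ^ 2)
    (I : Set ℝ)
    (q p q' p' : ℝ → ℂ)
    (hq : ∀ t ∈ I, HasDerivAt q (q' t) t)
    (hp : ∀ t ∈ I, HasDerivAt p (p' t) t)
    (hqne : ∀ t ∈ I, q t ≠ 0)
    (heq1 : ∀ t ∈ I, q' t = p t)
    (heq2 : ∀ t ∈ I, p' t =
        (3 / 2) * (q t / 2) ^ 5 + 4 * (t : ℂ) * (q t / 2) ^ 3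
          + 2 * ((t : ℂ) ^ 2 - α) * (q t / 2) + β / (q t / 2) ^ 3)
    (lam mu : ℝ → ℂ)
    (hlam : ∀ t, lam t = (q t / 2) ^ 2)
    (hmu : ∀ t, mu t = p t / (2 * q t)
        + (lam t + 2 * (t : ℂ) + 2 * κ₀ / lam t) / 4)
    (H : ℂ → ℂ → ℝ → ℂ)
    (hH : ∀ l m t, H l m t = 2 * l *
        (m ^ 2 - (l / 2 + (t : ℂ) + κ₀ / l) * m + θinf / 2)) :
    ∀ t ∈ I,
      HasDerivAt lam (deriv (fun m => H (lam t) m t) (mu t)) t ∧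
      HasDerivAt mu (-deriv (fun l => H l (mu t) t) (lam t)) t := by
  intro t ht
  have hq0 := hqne t ht
  have hlam0 : lam t ≠ 0 := by rw [hlam]; exact pow_ne_zero 2 (div_ne_zero hq0 two_ne_zero)
  have hlam_eq : lam = fun s => (q s / 2) ^ 2 := funext hlam
  have hmu_eq : mu = fun s => pivMomentum κ₀ (q s) (p s) s := funext fun s => by
    rw [hmu, hlam, pivMomentum]
  have hH_eq : ∀ l m, H l m t = pivHamiltonian κ₀ θinf l m t := fun l m => hH l m t
  simp only [hH_eq]
  constructor
  · rw [(hasDerivAt_pivHamiltonian_momentum κ₀ θinf _ _ _).deriv, hmu_eq, hlam_eq]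
    refine (hasDerivAt_sq_half (hq t ht)).congr_deriv ?_
    rw [mul_assoc, two_mul_pivMomentum, add_sub_cancel_right, heq1 t ht]
    field_simp
  · rw [(hasDerivAt_pivHamiltonian_position κ₀ θinf _ _ hlam0).deriv, hmu_eq, hlam_eq]
    refine (hasDerivAt_pivMomentum κ₀ (hq t ht) (hp t ht) hq0).congr_deriv ?_
    rw [heq1 t ht, heq2 t ht, hα, hβ]
    exact pivMomentum_flow_deriv_eq κ₀ θinf (q t) (p t) t hq0

/-- The canonical transformation from the Calogero side of P_IV (rational Inozemtsev
model, rank one) to the polynomial Hamiltonian form of P_IV. -/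
theorem PIV_canonical_transformation
    (κ₀ θinf α β : ℂ)
    (hα : α = 2 * θinf - κ₀ + 1) (hβ : β = -2 * κ₀ ^ 2)
    (I : Set ℝ) (hI : IsOpen I)
    (q p q' p' : ℝ → ℂ)
    (hq : ∀ t ∈ I, HasDerivAt q (q' t) t)
    (hp : ∀ t ∈ I, HasDerivAt p (p' t) t)
    (hqne : ∀ t ∈ I, q t ≠ 0)
    (heq1 : ∀ t ∈ I, q' t = p t)
    (heq2 : ∀ t ∈ I, p' t =
        (3 / 2) * (q t / 2) ^ 5 + 4 * (t : ℂ) * (q t / 2) ^ 3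
          + 2 * ((t : ℂ) ^ 2 - α) * (q t / 2) + β / (q t / 2) ^ 3)
    (lam mu : ℝ → ℂ)
    (hlam : ∀ t, lam t = (q t / 2) ^ 2)
    (hmu : ∀ t, mu t = p t / (2 * q t)
        + (lam t + 2 * (t : ℂ) + 2 * κ₀ / lam t) / 4)
    (H : ℂ → ℂ → ℝ → ℂ)
    (hH : ∀ l m t, H l m t = 2 * l *
        (m ^ 2 - (l / 2 + (t : ℂ) + κ₀ / l) * m + θinf / 2)) :
    ∀ t ∈ I,
      HasDerivAt lam (deriv (fun m => H (lam t) m t) (mu t)) t ∧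
      HasDerivAt mu (-deriv (fun l => H l (mu t) t) (lam t)) t :=
  PIV_canonical_transformation_general κ₀ θinf α β hα hβ I q p q' p' hq hp hqne heq1 heq2 lam mu
    hlam hmu H hH
end

section
/- Let α ∈ ℂ, let I ⊆ ℝ be an open interval, and let q, p : I → ℂ be differentiable, satisfying the Hamiltonian system q'(t) = p(t) and p'(t) = 2q(t)(q(t)² + t/2) + α (the canonical equations q' = ∂𝓗/∂p, p' = −∂𝓗/∂q for 𝓗(q,p,t) = p²/2 − (1/2)(q² + t/2)² − αq). Define λ(t) = q(t) and μ(t) = p(t) + q(t)² + t/2. Then λ and μ satisfy λ'(t) = μ(t) − (λ(t)² + t/2) and μ'(t) = 2λ(t)μ(t) + α + 1/2, i.e., the canonical equations λ' = ∂H/∂μ, μ' = −∂H/∂λ for the polynomial P_II Hamiltonian H(λ,μ,t) = μ²/2 − (λ² + t/2)μ − (α + 1/2)λ. -/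
open Complex

theorem HasDerivAt.add_sq_add_ofReal_div_two {p q : ℝ → ℂ} {p' q' : ℂ} {t : ℝ}
    (hp : HasDerivAt p p' t) (hq : HasDerivAt q q' t) :
    HasDerivAt (fun s => p s + q s ^ 2 + (s : ℂ) / 2) (p' + 2 * q t * q' + 1 / 2) t := by
  have hsq : HasDerivAt (fun s => q s ^ 2) (2 * q t * q') t := by
    simpa using hq.fun_pow 2
  have hhalf : HasDerivAt (fun s : ℝ => (s : ℂ) / 2) (1 / 2) t :=
    (hasDerivAt_id t).ofReal_comp.div_const 2
  exact (hp.add hsq).add hhalf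

theorem PII_canonical_transformation_general
    (α : ℂ) (I : Set ℝ)
    (q p q' p' : ℝ → ℂ)
    (hq : ∀ t ∈ I, HasDerivAt q (q' t) t)
    (hp : ∀ t ∈ I, HasDerivAt p (p' t) t)
    (heq1 : ∀ t ∈ I, q' t = p t)
    (heq2 : ∀ t ∈ I, p' t = 2 * q t * (q t ^ 2 + (t : ℂ) / 2) + α)
    (lam mu : ℝ → ℂ)
    (hlam : ∀ t, lam t = q t)
    (hmu : ∀ t, mu t = p t + q t ^ 2 + (t : ℂ) / 2) :
    ∀ t ∈ I,
      HasDerivAt lam (mu t - (lam t ^ 2 + (t : ℂ) / 2)) t ∧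
      HasDerivAt mu (2 * lam t * mu t + α + 1 / 2) t := by
  obtain rfl : mu = fun t => p t + q t ^ 2 + (t : ℂ) / 2 := funext hmu
  rw [show lam = q from funext hlam]
  intro t ht
  constructor
  · convert hq t ht using 1
    rw [heq1 t ht]
    ring
  · convert (hp t ht).add_sq_add_ofReal_div_two (hq t ht) using 1
    rw [heq1 t ht, heq2 t ht]
    ring

/-- The canonical transformation from the Calogero side of P_II to the polynomial
Hamiltonian form of P_II. -/
theorem PII_canonical_transformation
    (α : ℂ) (I : Set ℝ) (hI : IsOpen I)
    (q p q' p' : ℝ → ℂ)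
    (hq : ∀ t ∈ I, HasDerivAt q (q' t) t)
    (hp : ∀ t ∈ I, HasDerivAt p (p' t) t)
    (heq1 : ∀ t ∈ I, q' t = p t)
    (heq2 : ∀ t ∈ I, p' t = 2 * q t * (q t ^ 2 + (t : ℂ) / 2) + α)
    (lam mu : ℝ → ℂ)
    (hlam : ∀ t, lam t = q t)
    (hmu : ∀ t, mu t = p t + q t ^ 2 + (t : ℂ) / 2) :
    ∀ t ∈ I,
      HasDerivAt lam (mu t - (lam t ^ 2 + (t : ℂ) / 2)) t ∧
      HasDerivAt mu (2 * lam t * mu t + α + 1 / 2) t :=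
  PII_canonical_transformation_general α I q p q' p' hq hp heq1 heq2 lam mu hlam hmu
end

section
/- Fix an integer ℓ ≥ 1 and constants α, g ∈ ℂ. Let I ⊆ ℝ be an open interval and let q_j, p_j : I → ℂ (j = 1,…,ℓ) be differentiable with q_j ≠ q_k on I for each j ≠ k. Suppose they satisfy the canonical equations q_j' = (∂𝓗/∂p_j) and p_j' = −(∂𝓗/∂q_j) for the Hamiltonian 𝓗(q,p,t) = Σ_{j=1}^{ℓ} [ p_j²/2 − (1/2)(q_j² + t/2)² − αq_j ] + g² Σ_{j≠k} 1/(q_j−q_k)². Define λ_j = q_j and μ_j = p_j + q_j² + t/2. Then the λ_j, μ_j satisfy the canonical equations λ_j' = (∂H/∂μ_j) and μ_j' = −(∂H/∂λ_j) for the multi-component P_II Hamiltonian H(λ,μ,t) = Σ_{j=1}^{ℓ} [ μ_j²/2 − (λ_j² + t/2)μ_j − (α + 1/2)λ_j ] + g² Σ_{j≠k} 1/(λ_j−λ_k)². -/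
/-!
The substitution `μ = p + q² + t/2` is a time-dependent canonical change of momenta, so both
canonical equations reduce to comparing partial derivatives of the two Hamiltonians. Every
Hamiltonian here is a sum of one-particle terms plus the common pair potential, whose
coordinate derivative appears identically on both sides; only its differentiability at
configurations with distinct coordinates is needed. The extra term `-λ/2` of `H` compensates
`∂μ/∂t = 1/2`.
-/

open Function

theorem HasDerivAt.sum_update {𝕜 F ι : Type*} [NontriviallyNormedField 𝕜]
    [NormedAddCommGroup F] [NormedSpace 𝕜 F] [Fintype ι] [DecidableEq ι]
    {f : ι → 𝕜 → F} {f' : F} {v : ι → 𝕜} {j : ι} (hf : HasDerivAt (f j) f' (v j)) :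
    HasDerivAt (fun x => ∑ i, f i (update v j x i)) f' (v j) := by
  simp only [apply_update f, Finset.sum_update_of_mem (Finset.mem_univ j)]
  exact hf.add_const _

noncomputable def pairPotential {ℓ : ℕ} (g : ℂ) (Q : Fin ℓ → ℂ) : ℂ :=
  g ^ 2 * ∑ j, ∑ k, (if j ≠ k then 1 / (Q j - Q k) ^ 2 else 0)

theorem differentiableAt_pairPotential {ℓ : ℕ} (g : ℂ) {Q : Fin ℓ → ℂ} (hQ : Injective Q) :
    DifferentiableAt ℂ (pairPotential g) Q := by
  unfold pairPotential
  refine (DifferentiableAt.fun_sum fun a _ => DifferentiableAt.fun_sum fun b _ => ?_).const_mul _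
  split_ifs with hab
  · have : Q a - Q b ≠ 0 := sub_ne_zero.mpr (hQ.ne hab)
    fun_prop (disch := exact pow_ne_zero 2 this)
  · exact differentiableAt_const 0

theorem differentiableAt_pairPotential_update {ℓ : ℕ} (g : ℂ) {Q : Fin ℓ → ℂ}
    (hQ : Injective Q) (j : Fin ℓ) :
    DifferentiableAt ℂ (fun x => pairPotential g (update Q j x)) (Q j) := by
  have hV : DifferentiableAt ℂ (pairPotential g) (update Q j (Q j)) := by
    rw [update_eq_self]
    exact differentiableAt_pairPotential g hQ
  exact hV.comp (Q j) (hasFDerivAt_update Q (Q j)).differentiableAt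

noncomputable def rationalHamiltonian {ℓ : ℕ} (α g : ℂ) (Q P : Fin ℓ → ℂ) (t : ℝ) : ℂ :=
  (∑ j, (P j ^ 2 / 2 - (1 / 2) * (Q j ^ 2 + (t : ℂ) / 2) ^ 2 - α * Q j)) + pairPotential g Q

noncomputable def painleveIIHamiltonian {ℓ : ℕ} (α g : ℂ) (L M : Fin ℓ → ℂ) (t : ℝ) : ℂ :=
  (∑ j, (M j ^ 2 / 2 - (L j ^ 2 + (t : ℂ) / 2) * M j - (α + 1 / 2) * L j)) + pairPotential g L

section

variable {ℓ : ℕ} (α g : ℂ) (t : ℝ) (j : Fin ℓ)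

theorem hasDerivAt_rationalHamiltonian_momentum (Q P : Fin ℓ → ℂ) :
    HasDerivAt (fun x => rationalHamiltonian α g Q (update P j x) t) (P j) (P j) := by
  refine (HasDerivAt.sum_update (f := fun i y => y ^ 2 / 2 - (1 / 2) * (Q i ^ 2 + (t : ℂ) / 2) ^ 2
    - α * Q i) ?_).add_const (pairPotential g Q)
  exact ((((hasDerivAt_pow 2 (P j)).div_const 2).sub_const
    ((1 / 2) * (Q j ^ 2 + (t : ℂ) / 2) ^ 2)).sub_const (α * Q j)).congr_deriv (by push_cast; ring)

theorem hasDerivAt_rationalHamiltonian_position {Q : Fin ℓ → ℂ} (hQ : Injective Q)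
    (P : Fin ℓ → ℂ) :
    HasDerivAt (fun x => rationalHamiltonian α g (update Q j x) P t)
      (-(2 * Q j * (Q j ^ 2 + (t : ℂ) / 2)) - α
        + deriv (fun x => pairPotential g (update Q j x)) (Q j)) (Q j) := by
  refine (HasDerivAt.sum_update (f := fun i y => P i ^ 2 / 2 - (1 / 2) * (y ^ 2 + (t : ℂ) / 2) ^ 2
    - α * y) ?_).add (differentiableAt_pairPotential_update g hQ j).hasDerivAt
  have hquartic := (((hasDerivAt_pow 2 (Q j)).add_const ((t : ℂ) / 2)).fun_pow 2).const_mul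
    (1 / 2 : ℂ)
  exact ((hquartic.const_sub (P j ^ 2 / 2)).sub ((hasDerivAt_id' (Q j)).const_mul α)).congr_deriv
    (by push_cast; ring)

theorem hasDerivAt_painleveIIHamiltonian_momentum (L M : Fin ℓ → ℂ) :
    HasDerivAt (fun x => painleveIIHamiltonian α g L (update M j x) t)
      (M j - (L j ^ 2 + (t : ℂ) / 2)) (M j) := by
  refine (HasDerivAt.sum_update (f := fun i y => y ^ 2 / 2 - (L i ^ 2 + (t : ℂ) / 2) * y
    - (α + 1 / 2) * L i) ?_).add_const (pairPotential g L)
  exact ((((hasDerivAt_pow 2 (M j)).div_const 2).sub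
    ((hasDerivAt_id' (M j)).const_mul (L j ^ 2 + (t : ℂ) / 2))).sub_const
    ((α + 1 / 2) * L j)).congr_deriv (by push_cast; ring)

theorem hasDerivAt_painleveIIHamiltonian_position {L : Fin ℓ → ℂ} (hL : Injective L)
    (M : Fin ℓ → ℂ) :
    HasDerivAt (fun x => painleveIIHamiltonian α g (update L j x) M t)
      (-(2 * L j * M j) - (α + 1 / 2)
        + deriv (fun x => pairPotential g (update L j x)) (L j)) (L j) := by
  refine (HasDerivAt.sum_update (f := fun i y => M i ^ 2 / 2 - (y ^ 2 + (t : ℂ) / 2) * M i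
    - (α + 1 / 2) * y) ?_).add (differentiableAt_pairPotential_update g hL j).hasDerivAt
  exact (((((hasDerivAt_pow 2 (L j)).add_const ((t : ℂ) / 2)).mul_const (M j)).const_sub
    (M j ^ 2 / 2)).sub ((hasDerivAt_id' (L j)).const_mul (α + 1 / 2))).congr_deriv
    (by push_cast; ring)

end

theorem multi_component_PII_general
    (ℓ : ℕ) (α g : ℂ)
    (I : Set ℝ)
    (q p q' p' : Fin ℓ → ℝ → ℂ)
    (hq : ∀ j, ∀ t ∈ I, HasDerivAt (q j) (q' j t) t)
    (hp : ∀ j, ∀ t ∈ I, HasDerivAt (p j) (p' j t) t)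
    (hd : ∀ j k, j ≠ k → ∀ t ∈ I, q j t ≠ q k t)
    (𝓗 : (Fin ℓ → ℂ) → (Fin ℓ → ℂ) → ℝ → ℂ)
    (h𝓗 : ∀ Q P t, 𝓗 Q P t =
        (∑ j, (P j ^ 2 / 2 - (1 / 2) * (Q j ^ 2 + (t : ℂ) / 2) ^ 2 - α * Q j))
        + g ^ 2 * ∑ j, ∑ k,
            (if j ≠ k then 1 / (Q j - Q k) ^ 2 else 0))
    (hham1 : ∀ j, ∀ t ∈ I, q' j t =
        deriv (fun x => 𝓗 (fun i => q i t) (Function.update (fun i => p i t) j x) t)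
          (p j t))
    (hham2 : ∀ j, ∀ t ∈ I, p' j t =
        -deriv (fun x => 𝓗 (Function.update (fun i => q i t) j x) (fun i => p i t) t)
          (q j t))
    (lam mu : Fin ℓ → ℝ → ℂ)
    (hlam : ∀ j t, lam j t = q j t)
    (hmu : ∀ j t, mu j t = p j t + q j t ^ 2 + (t : ℂ) / 2)
    (H : (Fin ℓ → ℂ) → (Fin ℓ → ℂ) → ℝ → ℂ)
    (hH : ∀ L M t, H L M t =
        (∑ j, (M j ^ 2 / 2 - (L j ^ 2 + (t : ℂ) / 2) * M j - (α + 1 / 2) * L j))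
        + g ^ 2 * ∑ j, ∑ k,
            (if j ≠ k then 1 / (L j - L k) ^ 2 else 0)) :
    ∀ j, ∀ t ∈ I,
      HasDerivAt (lam j)
        (deriv (fun x => H (fun i => lam i t) (Function.update (fun i => mu i t) j x) t)
          (mu j t)) t
      ∧ HasDerivAt (mu j)
        (-deriv (fun x => H (Function.update (fun i => lam i t) j x) (fun i => mu i t) t)
          (lam j t)) t := by
  have h𝓗 : 𝓗 = rationalHamiltonian α g := funext fun Q => funext fun P => funext (h𝓗 Q P)
  have hH : H = painleveIIHamiltonian α g := funext fun L => funext fun M => funext (hH L M)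
  have hlam : q = lam := funext fun j => funext fun s => (hlam j s).symm
  have hmu : mu = fun j s => p j s + q j s ^ 2 + (s : ℂ) / 2 := funext fun j => funext (hmu j)
  subst h𝓗 hH hmu hlam
  intro j t ht
  have hQ : Injective fun i => q i t := fun a b hab => by_contra fun hne => hd a b hne t ht hab
  set W' := deriv (fun x => pairPotential g (update (fun i => q i t) j x)) (q j t)
  have hq' : q' j t = p j t := by
    rw [hham1 j t ht, (hasDerivAt_rationalHamiltonian_momentum α g t j _ _).deriv]
  have hp' : p' j t = 2 * q j t * (q j t ^ 2 + (t : ℂ) / 2) + α - W' := by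
    rw [hham2 j t ht, (hasDerivAt_rationalHamiltonian_position α g t j hQ _).deriv]
    ring
  rw [(hasDerivAt_painleveIIHamiltonian_momentum α g t j _ _).deriv,
    (hasDerivAt_painleveIIHamiltonian_position α g t j hQ _).deriv]
  constructor
  · exact (hq j t ht).congr_deriv (by rw [hq']; ring)
  · have hmu' := ((hp j t ht).add ((hq j t ht).fun_pow 2)).add
      ((hasDerivAt_id t).ofReal_comp.div_const 2)
    exact hmu'.congr_deriv (by rw [hq', hp']; push_cast; ring)

/-- The canonical transformation from the rank-ℓ second rational model to the
multi-component second Painlevé equation. -/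
theorem multi_component_PII
    (ℓ : ℕ) (hℓ : 1 ≤ ℓ) (α g : ℂ)
    (I : Set ℝ) (hI : IsOpen I)
    (q p q' p' : Fin ℓ → ℝ → ℂ)
    (hq : ∀ j, ∀ t ∈ I, HasDerivAt (q j) (q' j t) t)
    (hp : ∀ j, ∀ t ∈ I, HasDerivAt (p j) (p' j t) t)
    (hd : ∀ j k, j ≠ k → ∀ t ∈ I, q j t ≠ q k t)
    (𝓗 : (Fin ℓ → ℂ) → (Fin ℓ → ℂ) → ℝ → ℂ)
    (h𝓗 : ∀ Q P t, 𝓗 Q P t =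
        (∑ j, (P j ^ 2 / 2 - (1 / 2) * (Q j ^ 2 + (t : ℂ) / 2) ^ 2 - α * Q j))
        + g ^ 2 * ∑ j, ∑ k,
            (if j ≠ k then 1 / (Q j - Q k) ^ 2 else 0))
    (hham1 : ∀ j, ∀ t ∈ I, q' j t =
        deriv (fun x => 𝓗 (fun i => q i t) (Function.update (fun i => p i t) j x) t)
          (p j t))
    (hham2 : ∀ j, ∀ t ∈ I, p' j t =
        -deriv (fun x => 𝓗 (Function.update (fun i => q i t) j x) (fun i => p i t) t)
          (q j t))
    (lam mu : Fin ℓ → ℝ → ℂ)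
    (hlam : ∀ j t, lam j t = q j t)
    (hmu : ∀ j t, mu j t = p j t + q j t ^ 2 + (t : ℂ) / 2)
    (H : (Fin ℓ → ℂ) → (Fin ℓ → ℂ) → ℝ → ℂ)
    (hH : ∀ L M t, H L M t =
        (∑ j, (M j ^ 2 / 2 - (L j ^ 2 + (t : ℂ) / 2) * M j - (α + 1 / 2) * L j))
        + g ^ 2 * ∑ j, ∑ k,
            (if j ≠ k then 1 / (L j - L k) ^ 2 else 0)) :
    ∀ j, ∀ t ∈ I,
      HasDerivAt (lam j)
        (deriv (fun x => H (fun i => lam i t) (Function.update (fun i => mu i t) j x) t)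
          (mu j t)) t
      ∧ HasDerivAt (mu j)
        (-deriv (fun x => H (Function.update (fun i => lam i t) j x) (fun i => mu i t) t)
          (lam j t)) t :=
  multi_component_PII_general ℓ α g I q p q' p' hq hp hd 𝓗 h𝓗 hham1 hham2 lam mu hlam hmu H hH
end

section
/- Let q, r ∈ ℂ with sinh(q/2) ≠ 0, sinh(r/2) ≠ 0, sinh((q−r)/2) ≠ 0 and sinh((q+r)/2) ≠ 0, and set λ = coth²(q/2) and ρ = coth²(r/2). Then λ ≠ ρ and 1/sinh²((q−r)/2) + 1/sinh²((q+r)/2) = 2(λ−1)(ρ−1)(λ+ρ)/(λ−ρ)². -/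
/-!
With `a = q/2`, `b = r/2`, the addition formulas and `cosh² = sinh² + 1` give
`coth² a - 1 = 1 / sinh² a`,
`coth² a - coth² b = -sinh (a - b) sinh (a + b) / (sinh a sinh b)²` and
`coth² a + coth² b = (sinh² (a - b) + sinh² (a + b)) / (2 (sinh a sinh b)²)`.
Both sides of the identity are then
`(sinh² (a - b) + sinh² (a + b)) / (sinh (a - b) sinh (a + b))²`.
-/

namespace Complex

variable {x y : ℂ}

theorem coth_sq_sub_one (hx : sinh x ≠ 0) : (cosh x / sinh x) ^ 2 - 1 = 1 / sinh x ^ 2 := by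
  field_simp
  linear_combination cosh_sq x

theorem coth_sq_sub_coth_sq (hx : sinh x ≠ 0) (hy : sinh y ≠ 0) :
    (cosh x / sinh x) ^ 2 - (cosh y / sinh y) ^ 2
      = -(sinh (x - y) * sinh (x + y)) / (sinh x * sinh y) ^ 2 := by
  rw [sinh_sub, sinh_add]
  field_simp
  ring

theorem coth_sq_add_coth_sq (hx : sinh x ≠ 0) (hy : sinh y ≠ 0) :
    (cosh x / sinh x) ^ 2 + (cosh y / sinh y) ^ 2
      = (sinh (x - y) ^ 2 + sinh (x + y) ^ 2) / (2 * (sinh x * sinh y) ^ 2) := by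
  rw [sinh_sub, sinh_add]
  field_simp
  ring

end Complex

open Complex

/-- The two-body potential of the hyperbolic Inozemtsev model in the P_V variables
λ = coth²(q/2), ρ = coth²(r/2). -/
theorem two_body_potential_PV_variables
    (q r : ℂ)
    (hq : Complex.sinh (q / 2) ≠ 0) (hr : Complex.sinh (r / 2) ≠ 0)
    (hqr : Complex.sinh ((q - r) / 2) ≠ 0) (hqr' : Complex.sinh ((q + r) / 2) ≠ 0)
    (lam ρ : ℂ)
    (hlam : lam = (Complex.cosh (q / 2) / Complex.sinh (q / 2)) ^ 2)
    (hρ : ρ = (Complex.cosh (r / 2) / Complex.sinh (r / 2)) ^ 2) :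
    lam ≠ ρ ∧
      1 / Complex.sinh ((q - r) / 2) ^ 2 + 1 / Complex.sinh ((q + r) / 2) ^ 2
        = 2 * (lam - 1) * (ρ - 1) * (lam + ρ) / (lam - ρ) ^ 2 := by
  rw [sub_div] at hqr ⊢
  rw [add_div] at hqr' ⊢
  subst hlam hρ
  have hsub := coth_sq_sub_coth_sq hq hr
  refine ⟨sub_ne_zero.mp ?_, ?_⟩
  · rw [hsub]
    exact div_ne_zero (neg_ne_zero.mpr (mul_ne_zero hqr hqr')) (pow_ne_zero _ (mul_ne_zero hq hr))
  · rw [coth_sq_sub_one hq, coth_sq_sub_one hr, hsub, coth_sq_add_coth_sq hq hr]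
    generalize sinh (q / 2 - r / 2) = D at hqr
    generalize sinh (q / 2 + r / 2) = S at hqr'
    field_simp
    ring
end
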